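/- The set of 1-cells ξ : a⊖ → b⊕ in the cube 𝒬(n+1) is in bijection with triples (x, x̄, x̂) where x ∈ ⟦n⟧_0, x̄ is a 1-cell a → x in 𝒬(n), and x̂ is a 1-cell x → b in 𝒬(n); the bijection sends (x, x̄, x̂) to x̄⊖ ∪ {x⊙} ∪ x̂⊕. -/
import Mathlib


/-- The three symbols `⊖`, `⊙`, `⊕`. -/
inductive CSym : Type
  | minus : CSym
  | mid : CSym
  | plus : CSym
deriving DecidableEq

/-- `Str n j` is `⟦n⟧_j`: strings of length `n` over `{⊖,⊙,⊕}` with exactly `j`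
occurrences of `⊙`. -/
def Str (n j : ℕ) : Type := {l : List CSym // l.length = n ∧ l.count CSym.mid = j}

/-- The odd face `f⁻` of `f ∈ ⟦n⟧_1`: replace the unique `⊙` by `⊖`. -/
def fneg {n : ℕ} (f : Str n 1) : Str n 0 :=
  ⟨f.1.map (fun s => if s = CSym.mid then CSym.minus else s), by
    refine ⟨by simp [f.2.1], ?_⟩
    rw [List.count_eq_zero]
    intro hmem
    rw [List.mem_map] at hmem
    obtain ⟨s, -, hs⟩ := hmem
    split at hs <;> simp_all⟩

/-- The even face `f⁺` of `f ∈ ⟦n⟧_1`: replace the unique `⊙` by `⊕`. -/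
def fpos {n : ℕ} (f : Str n 1) : Str n 0 :=
  ⟨f.1.map (fun s => if s = CSym.mid then CSym.plus else s), by
    refine ⟨by simp [f.2.1], ?_⟩
    rw [List.count_eq_zero]
    intro hmem
    rw [List.mem_map] at hmem
    obtain ⟨s, -, hs⟩ := hmem
    split at hs <;> simp_all⟩

/-- Well-formedness for a set of 1-dimensional cube elements: distinct elements
share no even face and no odd face. -/
def Wf1 {n : ℕ} (ξ : Set (Str n 1)) : Prop :=
  ∀ f ∈ ξ, ∀ g ∈ ξ, f ≠ g → fpos f ≠ fpos g ∧ fneg f ≠ fneg g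

/-- `ξ` moves `a` to `b`. -/
def Moves1 {n : ℕ} (ξ : Set (Str n 1)) (a b : Str n 0) : Prop :=
  ({b} : Set (Str n 0)) = ({a} ∪ fpos '' ξ) \ fneg '' ξ ∧
  ({a} : Set (Str n 0)) = ({b} ∪ fneg '' ξ) \ fpos '' ξ

/-- Append `⊖` to a string. -/
def appM {n j : ℕ} (a : Str n j) : Str (n+1) j :=
  ⟨a.1 ++ [CSym.minus], by
    refine ⟨by simp [a.2.1], ?_⟩
    simp [List.count_append, a.2.2, List.count_singleton]⟩

/-- Append `⊕` to a string. -/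
def appP {n j : ℕ} (a : Str n j) : Str (n+1) j :=
  ⟨a.1 ++ [CSym.plus], by
    refine ⟨by simp [a.2.1], ?_⟩
    simp [List.count_append, a.2.2, List.count_singleton]⟩

/-- Append `⊙` to a string. -/
def appO {n j : ℕ} (a : Str n j) : Str (n+1) (j+1) :=
  ⟨a.1 ++ [CSym.mid], by
    refine ⟨by simp [a.2.1], ?_⟩
    simp [List.count_append, a.2.2, List.count_singleton]⟩


namespace CubeAux

theorem Str.ext {n j : ℕ} {u v : Str n j} (h : u.1 = v.1) : u = v := Subtype.ext h

instance : Fintype CSym :=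
  ⟨{CSym.minus, CSym.mid, CSym.plus}, by intro x; cases x <;> simp⟩

instance {n j : ℕ} : Finite (Str n j) := by
  letI : Finite {l : List CSym // l.length = n} :=
    inferInstanceAs (Finite (List.Vector CSym n))
  have : Function.Injective (fun u : Str n j => (⟨u.1, u.2.1⟩ : List.Vector CSym n)) := by
    intro u v h
    exact Str.ext (congrArg List.Vector.toList h)
  exact Finite.of_injective _ this

theorem appM_inj {n j : ℕ} : Function.Injective (appM (n := n) (j := j)) := by
  intro u v h
  exact Str.ext (List.append_cancel_right (congrArg Subtype.val h))

theorem appP_inj {n j : ℕ} : Function.Injective (appP (n := n) (j := j)) := by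
  intro u v h
  exact Str.ext (List.append_cancel_right (congrArg Subtype.val h))

theorem appO_inj {n j : ℕ} : Function.Injective (appO (n := n) (j := j)) := by
  intro u v h
  exact Str.ext (List.append_cancel_right (congrArg Subtype.val h))

theorem last_ne {x y : CSym} (h : x ≠ y) {l l' : List CSym} : l ++ [x] ≠ l' ++ [y] := by
  intro he
  have := List.append_inj_right' he (by simp)
  simp at this
  exact h this

theorem appM_ne_appP {n j j' : ℕ} (u : Str n j) (v : Str n j') : (appM u).1 ≠ (appP v).1 :=
  last_ne (by simp)

theorem appM_ne_appO {n j j' : ℕ} (u : Str n j) (v : Str n j') : (appM u).1 ≠ (appO v).1 :=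
  last_ne (by simp)

theorem appP_ne_appO {n j j' : ℕ} (u : Str n j) (v : Str n j') : (appP u).1 ≠ (appO v).1 :=
  last_ne (by simp)

theorem fneg_appM {n : ℕ} (g : Str n 1) : fneg (appM g) = appM (fneg g) :=
  Str.ext (by simp [fneg, appM])

theorem fpos_appM {n : ℕ} (g : Str n 1) : fpos (appM g) = appM (fpos g) :=
  Str.ext (by simp [fpos, appM])

theorem fneg_appP {n : ℕ} (g : Str n 1) : fneg (appP g) = appP (fneg g) :=
  Str.ext (by simp [fneg, appP])

theorem fpos_appP {n : ℕ} (g : Str n 1) : fpos (appP g) = appP (fpos g) :=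
  Str.ext (by simp [fpos, appP])

theorem map_id_of_count {l : List CSym} (h : l.count CSym.mid = 0) :
    l.map (fun s => if s = CSym.mid then CSym.minus else s) = l ∧
    l.map (fun s => if s = CSym.mid then CSym.plus else s) = l := by
  rw [List.count_eq_zero] at h
  constructor <;>
  · conv_rhs => rw [← List.map_id l]
    exact List.map_congr_left (fun a ha => by
      have : a ≠ CSym.mid := fun e => h (e ▸ ha)
      simp [this])


theorem fneg_appO {n : ℕ} (x : Str n 0) : fneg (appO x) = appM x :=
  Str.ext (by
    show (x.1 ++ [CSym.mid]).map _ = x.1 ++ [CSym.minus]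
    rw [List.map_append, (map_id_of_count x.2.2).1]
    simp)

theorem fpos_appO {n : ℕ} (x : Str n 0) : fpos (appO x) = appP x :=
  Str.ext (by
    show (x.1 ++ [CSym.mid]).map _ = x.1 ++ [CSym.plus]
    rw [List.map_append, (map_id_of_count x.2.2).2]
    simp)

/-- Case analysis on the last symbol for 1-strings of length `n+1`. -/
theorem cases1 {n : ℕ} (f : Str (n+1) 1) :
    (∃ g : Str n 1, f = appM g) ∨ (∃ x : Str n 0, f = appO x) ∨ (∃ g : Str n 1, f = appP g) := by
  obtain ⟨l, hl, hc⟩ := f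
  have hne : l ≠ [] := by intro h; simp [h] at hl
  have hsplit : l.dropLast ++ [l.getLast hne] = l := List.dropLast_append_getLast hne
  have hlen : l.dropLast.length = n := by
    rw [List.length_dropLast, hl]; rfl
  have hcnt : l.dropLast.count CSym.mid + [l.getLast hne].count CSym.mid = 1 := by
    rw [← List.count_append, hsplit, hc]
  rcases he : l.getLast hne with _ | _ | _
  · left
    rw [he] at hcnt hsplit
    simp at hcnt
    exact ⟨⟨l.dropLast, hlen, hcnt⟩, Str.ext hsplit.symm⟩
  · right; left
    rw [he] at hcnt hsplit
    simp at hcnt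
    exact ⟨⟨l.dropLast, hlen, hcnt⟩, Str.ext hsplit.symm⟩
  · right; right
    rw [he] at hcnt hsplit
    simp at hcnt
    exact ⟨⟨l.dropLast, hlen, hcnt⟩, Str.ext hsplit.symm⟩

/-- Case analysis on the last symbol for 0-strings of length `n+1`. -/
theorem cases0 {n : ℕ} (y : Str (n+1) 0) :
    (∃ z : Str n 0, y = appM z) ∨ (∃ z : Str n 0, y = appP z) := by
  obtain ⟨l, hl, hc⟩ := y
  have hne : l ≠ [] := by intro h; simp [h] at hl
  have hsplit : l.dropLast ++ [l.getLast hne] = l := List.dropLast_append_getLast hne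
  have hlen : l.dropLast.length = n := by
    rw [List.length_dropLast, hl]; rfl
  have hcnt : l.dropLast.count CSym.mid + [l.getLast hne].count CSym.mid = 0 := by
    rw [← List.count_append, hsplit, hc]
  rcases he : l.getLast hne with _ | _ | _
  · left
    rw [he] at hcnt hsplit
    simp at hcnt
    exact ⟨⟨l.dropLast, hlen, hcnt⟩, Str.ext hsplit.symm⟩
  · rw [he] at hcnt; simp at hcnt
  · right
    rw [he] at hcnt hsplit
    simp at hcnt
    exact ⟨⟨l.dropLast, hlen, hcnt⟩, Str.ext hsplit.symm⟩


theorem appM_ne_appP' {n j : ℕ} (u v : Str n j) : appM u ≠ appP v :=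
  fun h => appM_ne_appP u v (congrArg Subtype.val h)

theorem appM_ne_appO' {n : ℕ} (u : Str n 1) (v : Str n 0) : appM u ≠ appO v :=
  fun h => appM_ne_appO u v (congrArg Subtype.val h)

theorem appP_ne_appO' {n : ℕ} (u : Str n 1) (v : Str n 0) : appP u ≠ appO v :=
  fun h => appP_ne_appO u v (congrArg Subtype.val h)

/-- Canonical form for subsets of 0-strings of length `n+1`. -/
def eMP {n : ℕ} (U V : Set (Str n 0)) : Set (Str (n+1) 0) := appM '' U ∪ appP '' V

theorem mem_eMP_M {n : ℕ} {U V : Set (Str n 0)} {z : Str n 0} :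
    appM z ∈ eMP U V ↔ z ∈ U := by
  constructor
  · rintro (⟨w, hw, he⟩ | ⟨w, hw, he⟩)
    · rwa [← appM_inj he]
    · exact absurd he.symm (appM_ne_appP' z w)
  · intro h; exact Or.inl ⟨z, h, rfl⟩

theorem mem_eMP_P {n : ℕ} {U V : Set (Str n 0)} {z : Str n 0} :
    appP z ∈ eMP U V ↔ z ∈ V := by
  constructor
  · rintro (⟨w, hw, he⟩ | ⟨w, hw, he⟩)
    · exact absurd he (appM_ne_appP' w z)
    · rwa [← appP_inj he]
  · intro h; exact Or.inr ⟨z, h, rfl⟩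

theorem eMP_inj {n : ℕ} {U V U' V' : Set (Str n 0)}
    (h : eMP U V = eMP U' V') : U = U' ∧ V = V' := by
  constructor
  · ext z
    rw [← @mem_eMP_M _ U V, ← @mem_eMP_M _ U' V', h]
  · ext z
    rw [← @mem_eMP_P _ U V, ← @mem_eMP_P _ U' V', h]

theorem eMP_union {n : ℕ} (U V U' V' : Set (Str n 0)) :
    eMP U V ∪ eMP U' V' = eMP (U ∪ U') (V ∪ V') := by
  simp only [eMP, Set.image_union]
  ext y; simp only [Set.mem_union]; tauto

theorem eMP_diff {n : ℕ} (U V U' V' : Set (Str n 0)) :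
    eMP U V \ eMP U' V' = eMP (U \ U') (V \ V') := by
  ext y
  rcases cases0 y with ⟨z, rfl⟩ | ⟨z, rfl⟩
  · simp only [Set.mem_diff, mem_eMP_M]
  · simp only [Set.mem_diff, mem_eMP_P]

theorem eMP_singM {n : ℕ} (z : Str n 0) : ({appM z} : Set (Str (n+1) 0)) = eMP {z} ∅ := by
  simp [eMP]

theorem eMP_singP {n : ℕ} (z : Str n 0) : ({appP z} : Set (Str (n+1) 0)) = eMP ∅ {z} := by
  simp [eMP]

/-- Canonical form for subsets of 1-strings of length `n+1`. -/
def eT {n : ℕ} (P : Set (Str n 1)) (S : Set (Str n 0)) (Q : Set (Str n 1)) :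
    Set (Str (n+1) 1) := appM '' P ∪ appO '' S ∪ appP '' Q

theorem mem_eT_M {n : ℕ} {P Q : Set (Str n 1)} {S : Set (Str n 0)} {g : Str n 1} :
    appM g ∈ eT P S Q ↔ g ∈ P := by
  constructor
  · rintro ((⟨w, hw, he⟩ | ⟨w, hw, he⟩) | ⟨w, hw, he⟩)
    · rwa [← appM_inj he]
    · exact absurd he.symm (appM_ne_appO' g w)
    · exact absurd he.symm (appM_ne_appP' g w)
  · intro h; exact Or.inl (Or.inl ⟨g, h, rfl⟩)

theorem mem_eT_O {n : ℕ} {P Q : Set (Str n 1)} {S : Set (Str n 0)} {x : Str n 0} :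
    appO x ∈ eT P S Q ↔ x ∈ S := by
  constructor
  · rintro ((⟨w, hw, he⟩ | ⟨w, hw, he⟩) | ⟨w, hw, he⟩)
    · exact absurd he (appM_ne_appO' w x)
    · rwa [← appO_inj he]
    · exact absurd he (appP_ne_appO' w x)
  · intro h; exact Or.inl (Or.inr ⟨x, h, rfl⟩)

theorem mem_eT_P {n : ℕ} {P Q : Set (Str n 1)} {S : Set (Str n 0)} {g : Str n 1} :
    appP g ∈ eT P S Q ↔ g ∈ Q := by
  constructor
  · rintro ((⟨w, hw, he⟩ | ⟨w, hw, he⟩) | ⟨w, hw, he⟩)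
    · exact absurd he (appM_ne_appP' w g)
    · exact absurd he.symm (appP_ne_appO' g w)
    · rwa [← appP_inj he]
  · intro h; exact Or.inr ⟨g, h, rfl⟩

theorem fpos_eT {n : ℕ} (P Q : Set (Str n 1)) (S : Set (Str n 0)) :
    fpos '' eT P S Q = eMP (fpos '' P) (S ∪ fpos '' Q) := by
  simp only [eT, Set.image_union, Set.image_image, eMP]
  rw [Set.image_congr' (fun g => fpos_appM g), Set.image_congr' (fun x => fpos_appO x),
    Set.image_congr' (fun g => fpos_appP g)]
  rw [← Set.image_image appM fpos, ← Set.image_image appP fpos, Set.union_assoc,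
    ← Set.image_union]

theorem fneg_eT {n : ℕ} (P Q : Set (Str n 1)) (S : Set (Str n 0)) :
    fneg '' eT P S Q = eMP (fneg '' P ∪ S) (fneg '' Q) := by
  simp only [eT, Set.image_union, Set.image_image, eMP]
  rw [Set.image_congr' (fun g => fneg_appM g), Set.image_congr' (fun x => fneg_appO x),
    Set.image_congr' (fun g => fneg_appP g)]


theorem wf_eT_iff {n : ℕ} {P Q : Set (Str n 1)} {S : Set (Str n 0)} :
    Wf1 (eT P S Q) ↔
      Wf1 P ∧ Wf1 Q ∧ (∀ g ∈ P, fneg g ∉ S) ∧ (∀ g ∈ Q, fpos g ∉ S) := by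
  constructor
  · intro h
    refine ⟨?_, ?_, ?_, ?_⟩
    · intro f hf g hg hne
      have := h (appM f) (mem_eT_M.2 hf) (appM g) (mem_eT_M.2 hg)
        (fun e => hne (appM_inj e))
      rw [fpos_appM, fpos_appM, fneg_appM, fneg_appM] at this
      exact ⟨fun e => this.1 (congrArg appM e), fun e => this.2 (congrArg appM e)⟩
    · intro f hf g hg hne
      have := h (appP f) (mem_eT_P.2 hf) (appP g) (mem_eT_P.2 hg)
        (fun e => hne (appP_inj e))
      rw [fpos_appP, fpos_appP, fneg_appP, fneg_appP] at this
      exact ⟨fun e => this.1 (congrArg appP e), fun e => this.2 (congrArg appP e)⟩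
    · intro g hg hx
      have := h (appM g) (mem_eT_M.2 hg) (appO (fneg g)) (mem_eT_O.2 hx)
        (appM_ne_appO' g (fneg g))
      rw [fneg_appM, fneg_appO] at this
      exact this.2 rfl
    · intro g hg hx
      have := h (appP g) (mem_eT_P.2 hg) (appO (fpos g)) (mem_eT_O.2 hx)
        (appP_ne_appO' g (fpos g))
      rw [fpos_appP, fpos_appO] at this
      exact this.1 rfl
  · rintro ⟨hP, hQ, hPS, hQS⟩ f hf g hg hne
    rcases cases1 f with ⟨u, rfl⟩ | ⟨x, rfl⟩ | ⟨u, rfl⟩ <;>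
      rcases cases1 g with ⟨v, rfl⟩ | ⟨y, rfl⟩ | ⟨v, rfl⟩
    · have := hP u (mem_eT_M.1 hf) v (mem_eT_M.1 hg) (fun e => hne (congrArg appM e))
      rw [fpos_appM, fpos_appM, fneg_appM, fneg_appM]
      exact ⟨fun e => this.1 (appM_inj e), fun e => this.2 (appM_inj e)⟩
    · rw [fpos_appM, fpos_appO, fneg_appM, fneg_appO]
      exact ⟨appM_ne_appP' _ _, fun e =>
        hPS u (mem_eT_M.1 hf) (appM_inj e ▸ mem_eT_O.1 hg)⟩
    · rw [fpos_appM, fpos_appP, fneg_appM, fneg_appP]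
      exact ⟨appM_ne_appP' _ _, appM_ne_appP' _ _⟩
    · rw [fpos_appO, fpos_appM, fneg_appO, fneg_appM]
      exact ⟨(appM_ne_appP' _ _).symm,
        fun e => hPS v (mem_eT_M.1 hg) (appM_inj e.symm ▸ mem_eT_O.1 hf)⟩
    · have hxy : x ≠ y := fun e => hne (congrArg appO e)
      rw [fpos_appO, fpos_appO, fneg_appO, fneg_appO]
      exact ⟨fun e => hxy (appP_inj e), fun e => hxy (appM_inj e)⟩
    · rw [fpos_appO, fpos_appP, fneg_appO, fneg_appP]
      exact ⟨fun e => hQS v (mem_eT_P.1 hg) (appP_inj e.symm ▸ mem_eT_O.1 hf),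
        appM_ne_appP' _ _⟩
    · rw [fpos_appP, fpos_appM, fneg_appP, fneg_appM]
      exact ⟨(appM_ne_appP' _ _).symm, (appM_ne_appP' _ _).symm⟩
    · rw [fpos_appP, fpos_appO, fneg_appP, fneg_appO]
      exact ⟨fun e => hQS u (mem_eT_P.1 hf) (appP_inj e ▸ mem_eT_O.1 hg),
        (appM_ne_appP' _ _).symm⟩
    · have := hQ u (mem_eT_P.1 hf) v (mem_eT_P.1 hg) (fun e => hne (congrArg appP e))
      rw [fpos_appP, fpos_appP, fneg_appP, fneg_appP]
      exact ⟨fun e => this.1 (appP_inj e), fun e => this.2 (appP_inj e)⟩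

theorem moves_eT_iff {n : ℕ} {P Q : Set (Str n 1)} {S : Set (Str n 0)} {a b : Str n 0} :
    Moves1 (eT P S Q) (appM a) (appP b) ↔
      ((∅ : Set (Str n 0)) = ({a} ∪ fpos '' P) \ (fneg '' P ∪ S) ∧
        ({b} : Set (Str n 0)) = (S ∪ fpos '' Q) \ fneg '' Q) ∧
      (({a} : Set (Str n 0)) = (fneg '' P ∪ S) \ fpos '' P ∧
        (∅ : Set (Str n 0)) = ({b} ∪ fneg '' Q) \ (S ∪ fpos '' Q)) := by
  unfold Moves1
  rw [fpos_eT, fneg_eT, eMP_singM, eMP_singP, eMP_union, eMP_union, eMP_diff, eMP_diff]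
  simp only [Set.empty_union, Set.union_empty]
  constructor
  · rintro ⟨h1, h2⟩
    obtain ⟨h1a, h1b⟩ := eMP_inj h1
    obtain ⟨h2a, h2b⟩ := eMP_inj h2
    exact ⟨⟨h1a, h1b⟩, ⟨h2a, h2b⟩⟩
  · rintro ⟨⟨h1a, h1b⟩, ⟨h2a, h2b⟩⟩
    rw [← h1a, ← h1b, ← h2a, ← h2b]
    exact ⟨rfl, rfl⟩


theorem side_bar {n : ℕ} {P : Set (Str n 1)} {S : Set (Str n 0)} {a : Str n 0}
    (hwf : Wf1 P) (hcross : ∀ g ∈ P, fneg g ∉ S)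
    (C1 : (∅ : Set (Str n 0)) = ({a} ∪ fpos '' P) \ (fneg '' P ∪ S))
    (C3 : ({a} : Set (Str n 0)) = (fneg '' P ∪ S) \ fpos '' P) :
    ∃ x, S = {x} ∧ Moves1 P a x := by
  have hsub1 : {a} ∪ fpos '' P ⊆ fneg '' P ∪ S := Set.diff_eq_empty.mp C1.symm
  have hsub2 : fneg '' P ∪ S ⊆ fpos '' P ∪ {a} :=
    Set.diff_subset_iff.mp (le_of_eq C3.symm)
  have heq : fneg '' P ∪ S = {a} ∪ fpos '' P :=
    Set.Subset.antisymm (by rwa [Set.union_comm (fpos '' P)] at hsub2) hsub1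
  have ha : a ∉ fpos '' P := by
    have h : a ∈ ({a} : Set (Str n 0)) := rfl
    rw [C3] at h
    exact h.2
  have hdisjS : Disjoint (fneg '' P) S := by
    rw [Set.disjoint_left]
    rintro y ⟨g, hg, rfl⟩ hyS
    exact hcross g hg hyS
  have hdisja : Disjoint ({a} : Set (Str n 0)) (fpos '' P) := by
    rw [Set.disjoint_left]
    intro y hy
    rw [Set.mem_singleton_iff] at hy
    subst hy
    exact ha
  have hinjn : Set.InjOn fneg P := fun f hf g hg e => by
    by_contra hne
    exact (hwf f hf g hg hne).2 e
  have hinjp : Set.InjOn fpos P := fun f hf g hg e => by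
    by_contra hne
    exact (hwf f hf g hg hne).1 e
  have hcard : S.ncard = 1 := by
    have h1 := Set.ncard_union_eq hdisjS
    have h2 := Set.ncard_union_eq hdisja
    rw [heq, h2, Set.ncard_image_of_injOn hinjn, Set.ncard_image_of_injOn hinjp,
      Set.ncard_singleton] at h1
    omega
  obtain ⟨x, hS⟩ := Set.ncard_eq_one.mp hcard
  have hx : x ∉ fneg '' P := by
    rintro ⟨g, hg, rfl⟩
    exact hcross g hg (by rw [hS]; exact Set.mem_singleton _)
  refine ⟨x, hS, ?_, ?_⟩
  · rw [← heq, hS, Set.union_comm, Set.union_diff_right]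
    ext y
    simp only [Set.mem_diff, Set.mem_singleton_iff]
    exact ⟨fun h => ⟨h, h ▸ hx⟩, fun h => h.1⟩
  · rw [Set.union_comm, ← hS]
    exact C3


theorem side_hat {n : ℕ} {Q : Set (Str n 1)} {x b : Str n 0}
    (hcross : ∀ g ∈ Q, fpos g ∉ ({x} : Set (Str n 0)))
    (C2 : ({b} : Set (Str n 0)) = ({x} ∪ fpos '' Q) \ fneg '' Q)
    (C4 : (∅ : Set (Str n 0)) = ({b} ∪ fneg '' Q) \ ({x} ∪ fpos '' Q)) :
    Moves1 Q x b := by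
  have hsub1 : {b} ∪ fneg '' Q ⊆ {x} ∪ fpos '' Q := Set.diff_eq_empty.mp C4.symm
  have hsub2 : {x} ∪ fpos '' Q ⊆ fneg '' Q ∪ {b} :=
    Set.diff_subset_iff.mp (le_of_eq C2.symm)
  have heq : {b} ∪ fneg '' Q = {x} ∪ fpos '' Q :=
    Set.Subset.antisymm hsub1 (by rwa [Set.union_comm (fneg '' Q)] at hsub2)
  have hx : x ∉ fpos '' Q := by
    rintro ⟨g, hg, he⟩
    exact hcross g hg (by rw [Set.mem_singleton_iff]; exact he)
  refine ⟨C2, ?_⟩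
  rw [heq, Set.union_comm, Set.union_diff_left]
  ext y
  simp only [Set.mem_diff, Set.mem_singleton_iff]
  exact ⟨fun h => ⟨h, h ▸ hx⟩, fun h => h.1⟩

theorem phi_set {n : ℕ} (x : Str n 0) (P Q : Set (Str n 1)) :
    appM '' P ∪ {appO x} ∪ appP '' Q = eT P {x} Q := by
  rw [eT, Set.image_singleton]

theorem phi_mem {n : ℕ} {a x b : Str n 0} {P Q : Set (Str n 1)}
    (hwP : Wf1 P) (hmP : Moves1 P a x) (hwQ : Wf1 Q) (hmQ : Moves1 Q x b) :
    Wf1 (eT P {x} Q) ∧ Moves1 (eT P {x} Q) (appM a) (appP b) := by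
  obtain ⟨m1, m2⟩ := hmP
  obtain ⟨m3, m4⟩ := hmQ
  have hxn : x ∉ fneg '' P := by
    have h : x ∈ ({x} : Set (Str n 0)) := Set.mem_singleton _
    rw [m1] at h
    exact h.2
  have hxp : x ∉ fpos '' Q := by
    have h : x ∈ ({x} : Set (Str n 0)) := Set.mem_singleton _
    rw [m4] at h
    exact h.2
  constructor
  · rw [wf_eT_iff]
    refine ⟨hwP, hwQ, ?_, ?_⟩
    · intro g hg hmem
      rw [Set.mem_singleton_iff] at hmem
      exact hxn ⟨g, hg, hmem⟩
    · intro g hg hmem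
      rw [Set.mem_singleton_iff] at hmem
      exact hxp ⟨g, hg, hmem⟩
  · rw [moves_eT_iff]
    refine ⟨⟨?_, ?_⟩, ?_, ?_⟩
    · rw [← Set.diff_diff, ← m1]
      simp
    · exact m3
    · rw [Set.union_comm (fneg '' P)]
      exact m2
    · rw [Set.union_comm ({x} : Set (Str n 0)) (fpos '' Q), ← Set.diff_diff, ← m4]
      simp

end CubeAux

/-- The 1-cells `a⊖ → b⊕` of the cube `𝒬(n+1)` are in bijection with triples
`(x, x̄, x̂)` where `x ∈ ⟦n⟧_0`, `x̄ : a → x` and `x̂ : x → b` are 1-cells of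
`𝒬(n)`; the bijection sends `(x, x̄, x̂)` to `x̄⊖ ∪ {x⊙} ∪ x̂⊕`. -/
theorem cube_cylinder_one_cells (n : ℕ) (a b : Str n 0) :
    ∃ Φ : {t : Str n 0 × Set (Str n 1) × Set (Str n 1) //
             Wf1 t.2.1 ∧ Moves1 t.2.1 a t.1 ∧ Wf1 t.2.2 ∧ Moves1 t.2.2 t.1 b} →
          {ξ : Set (Str (n+1) 1) // Wf1 ξ ∧ Moves1 ξ (appM a) (appP b)},
      Function.Bijective Φ ∧
      ∀ t, (Φ t).1 = appM '' t.1.2.1 ∪ {appO t.1.1} ∪ appP '' t.1.2.2 := by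
  refine ⟨fun t => ⟨appM '' t.1.2.1 ∪ {appO t.1.1} ∪ appP '' t.1.2.2, by
      rw [CubeAux.phi_set]
      exact CubeAux.phi_mem t.2.1 t.2.2.1 t.2.2.2.1 t.2.2.2.2⟩, ⟨?_, ?_⟩, fun t => rfl⟩
  · rintro ⟨⟨x, P, Q⟩, hx⟩ ⟨⟨x', P', Q'⟩, hx'⟩ he
    have hs : appM '' P ∪ {appO x} ∪ appP '' Q = appM '' P' ∪ {appO x'} ∪ appP '' Q' :=
      congrArg Subtype.val he
    rw [CubeAux.phi_set, CubeAux.phi_set] at hs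
    have hxx : x = x' := by
      have h0 : appO x ∈ CubeAux.eT P ({x} : Set (Str n 0)) Q :=
        CubeAux.mem_eT_O.2 (Set.mem_singleton x)
      rw [hs] at h0
      have := (CubeAux.mem_eT_O (P := P') (S := ({x'} : Set (Str n 0))) (Q := Q') (x := x)).1 h0
      rwa [Set.mem_singleton_iff] at this
    have hPP : P = P' := by
      ext g
      rw [← CubeAux.mem_eT_M (S := ({x} : Set (Str n 0))) (Q := Q), hs, CubeAux.mem_eT_M]
    have hQQ : Q = Q' := by
      ext g
      rw [← CubeAux.mem_eT_P (S := ({x} : Set (Str n 0))) (P := P), hs, CubeAux.mem_eT_P]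
    subst hxx hPP hQQ
    rfl
  · rintro ⟨ξ, hwf, hmov⟩
    have hdec : ξ = CubeAux.eT {g | appM g ∈ ξ} {y | appO y ∈ ξ} {g | appP g ∈ ξ} := by
      ext f
      rcases CubeAux.cases1 f with ⟨g, rfl⟩ | ⟨y, rfl⟩ | ⟨g, rfl⟩
      · rw [CubeAux.mem_eT_M]; exact Iff.rfl
      · rw [CubeAux.mem_eT_O]; exact Iff.rfl
      · rw [CubeAux.mem_eT_P]; exact Iff.rfl
    rw [hdec] at hwf hmov
    rw [CubeAux.wf_eT_iff] at hwf
    rw [CubeAux.moves_eT_iff] at hmov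
    obtain ⟨hwP, hwQ, hcrP, hcrQ⟩ := hwf
    obtain ⟨⟨c1, c2⟩, c3, c4⟩ := hmov
    obtain ⟨x, hS, hmP⟩ := CubeAux.side_bar hwP hcrP c1 c3
    rw [hS] at c2 c4 hcrQ
    have hmQ := CubeAux.side_hat hcrQ c2 c4
    refine ⟨⟨⟨x, {g | appM g ∈ ξ}, {g | appP g ∈ ξ}⟩, hwP, hmP, hwQ, hmQ⟩, ?_⟩
    apply Subtype.ext
    show appM '' {g | appM g ∈ ξ} ∪ {appO x} ∪ appP '' {g | appP g ∈ ξ} = ξ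
    rw [CubeAux.phi_set, ← hS]
    exact hdec.symm
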